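/- Scaling property of δ: with P₀ = (x₁⁰,...,x_{n+2}⁰) in the standard (n+1)-simplex and x₁⁰ < 1, the point P̄₀ = (x₂⁰/(1−x₁⁰), ..., x_{n+2}⁰/(1−x₁⁰)) lies in the standard n-simplex, and the δ-value of P₀ relative to P₁¹ (computed with constants a₂,...,a_{n+2}) satisfies δ(P₀, P₁¹) = (1 − x₁⁰)·δ(P̄₀, P̄₁), where δ(P̄₀, P̄₁) is computed in the standard n-simplex. -/
import Mathlib


/-- The norm of the diagonal inner product `g` on ℝ^m in the basis `v₁ = P₁`,
`vᵢ = Pᵢ − P_{i−1}`, with `‖vᵢ‖_g = bᵢ`; the coordinates of `w` are `cᵢ = ∑_{j ≥ i} wⱼ`. -/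
noncomputable def gNorm {m : ℕ} (b : Fin m → ℝ) (w : Fin m → ℝ) : ℝ :=
  Real.sqrt (∑ i, (b i) ^ 2 * (∑ j ∈ Finset.Ici i, w j) ^ 2)

/-- The k-th point of the natural path from `x` to the best vertex:
`Q k = (x₁, …, x_k, 1 − x₁ − ⋯ − x_k, 0, …, 0)`; `Q 0 = P₁`, `Q 1 = P₁¹`. -/
noncomputable def pathPoint (n : ℕ) (x : Fin (n + 1) → ℝ) (k : ℕ) (i : Fin (n + 1)) : ℝ :=
  if (i : ℕ) < k then x i
  else if (i : ℕ) = k then 1 - ∑ j ∈ Finset.univ.filter (fun j : Fin (n + 1) => (j : ℕ) < k), x j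
  else 0

lemma aux_filter_succ {N : ℕ} (x : Fin N → ℝ) (K : ℕ) (hK : K < N) :
    ∑ j ∈ Finset.univ.filter (fun j : Fin N => (j : ℕ) < K + 1), x j
      = (∑ j ∈ Finset.univ.filter (fun j : Fin N => (j : ℕ) < K), x j) + x ⟨K, hK⟩ := by
  have h : Finset.univ.filter (fun j : Fin N => (j : ℕ) < K + 1)
      = insert (⟨K, hK⟩ : Fin N) (Finset.univ.filter (fun j : Fin N => (j : ℕ) < K)) := by
    ext j
    simp [Fin.ext_iff]
    omega
  rw [h, Finset.sum_insert (by simp)]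
  ring

lemma aux_filter_all {N : ℕ} (x : Fin N → ℝ) (K : ℕ) (hK : N ≤ K) :
    ∑ j ∈ Finset.univ.filter (fun j : Fin N => (j : ℕ) < K), x j = ∑ j, x j := by
  congr 1
  ext j
  simp
  omega

lemma aux_filter_le {N : ℕ} (x : Fin N → ℝ) (hx : ∀ j, 0 ≤ x j) (K : ℕ) :
    ∑ j ∈ Finset.univ.filter (fun j : Fin N => (j : ℕ) < K), x j ≤ ∑ j, x j :=
  Finset.sum_le_sum_of_subset_of_nonneg (Finset.filter_subset _ _) (fun j _ _ => hx j)

lemma gNorm_segment (n : ℕ) (x : Fin (n + 2) → ℝ) (hx : x ∈ stdSimplex ℝ (Fin (n + 2)))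
    (b : Fin (n + 2) → ℝ) (hb : ∀ j, 0 ≤ b j) (k : ℕ) (hk : k ≤ n) :
    gNorm b (pathPoint (n + 1) x (k + 1) - pathPoint (n + 1) x k)
      = b ⟨k + 1, by omega⟩ *
        (1 - ∑ j ∈ Finset.univ.filter (fun j : Fin (n + 2) => (j : ℕ) < k + 1), x j) := by
  have hrec : ∑ j ∈ Finset.univ.filter (fun j : Fin (n + 2) => (j : ℕ) < k + 1), x j
      = (∑ j ∈ Finset.univ.filter (fun j : Fin (n + 2) => (j : ℕ) < k), x j)
        + x ⟨k, by omega⟩ := aux_filter_succ x k (by omega)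
  have hw : ∀ j : Fin (n + 2), (pathPoint (n + 1) x (k + 1) - pathPoint (n + 1) x k) j
      = (if j = (⟨k, by omega⟩ : Fin (n + 2)) then
            -(1 - ∑ j ∈ Finset.univ.filter (fun j : Fin (n + 2) => (j : ℕ) < k + 1), x j)
          else 0)
        + (if j = (⟨k + 1, by omega⟩ : Fin (n + 2)) then
            (1 - ∑ j ∈ Finset.univ.filter (fun j : Fin (n + 2) => (j : ℕ) < k + 1), x j)
          else 0) := by
    intro j
    simp only [Pi.sub_apply, pathPoint, Fin.ext_iff, Fin.val_mk]
    split_ifs <;>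
      first
        | ring1
        | (exfalso; omega)
        | (have hj : j = (⟨k, by omega⟩ : Fin (n + 2)) := by
             have hv : (j : ℕ) = k := by omega
             exact Fin.ext hv
           rw [hj]
           linarith [hrec])
  have hsum : ∀ i : Fin (n + 2),
      ∑ j ∈ Finset.Ici i, (pathPoint (n + 1) x (k + 1) - pathPoint (n + 1) x k) j
        = if i = (⟨k + 1, by omega⟩ : Fin (n + 2)) then
            (1 - ∑ j ∈ Finset.univ.filter (fun j : Fin (n + 2) => (j : ℕ) < k + 1), x j)
          else 0 := by
    intro i
    rw [Finset.sum_congr rfl (fun j _ => hw j), Finset.sum_add_distrib,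
      Finset.sum_ite_eq' (Finset.Ici i) (⟨k, by omega⟩ : Fin (n + 2)),
      Finset.sum_ite_eq' (Finset.Ici i) (⟨k + 1, by omega⟩ : Fin (n + 2))]
    simp only [Finset.mem_Ici, Fin.le_def, Fin.ext_iff, Fin.val_mk]
    split_ifs <;> first | ring1 | (exfalso; omega)
  have hSnn : 0 ≤ 1 - ∑ j ∈ Finset.univ.filter (fun j : Fin (n + 2) => (j : ℕ) < k + 1), x j := by
    have h1 := aux_filter_le x hx.1 (k + 1)
    rw [hx.2] at h1
    linarith
  unfold gNorm
  rw [Finset.sum_congr rfl (fun i _ => by rw [hsum i])]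
  have h2 : ∑ i : Fin (n + 2),
      b i ^ 2 * (if i = (⟨k + 1, by omega⟩ : Fin (n + 2)) then
            (1 - ∑ j ∈ Finset.univ.filter (fun j : Fin (n + 2) => (j : ℕ) < k + 1), x j)
          else 0) ^ 2
      = ∑ i : Fin (n + 2),
        (if i = (⟨k + 1, by omega⟩ : Fin (n + 2)) then
          (b i * (1 - ∑ j ∈ Finset.univ.filter (fun j : Fin (n + 2) => (j : ℕ) < k + 1), x j)) ^ 2
          else 0) := by
    refine Finset.sum_congr rfl fun i _ => ?_
    split_ifs <;> ring
  rw [h2, Finset.sum_ite_eq' Finset.univ]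
  simp only [Finset.mem_univ, if_pos]
  exact Real.sqrt_sq (mul_nonneg (hb _) hSnn)

lemma aux_succ_filter (n : ℕ) (x : Fin (n + 2) → ℝ) (K : ℕ) (hK : K ≤ n + 1) :
    ∑ i ∈ Finset.univ.filter (fun i : Fin (n + 1) => (i : ℕ) < K), x i.succ
      = (∑ m ∈ Finset.univ.filter (fun m : Fin (n + 2) => (m : ℕ) < K + 1), x m) - x 0 := by
  induction K with
  | zero =>
      have h1 := aux_filter_succ x 0 (by omega)
      have h0 : (∑ m ∈ Finset.univ.filter (fun m : Fin (n + 2) => (m : ℕ) < 0), x m) = 0 := by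
        simp
      have e0 : (⟨0, by omega⟩ : Fin (n + 2)) = 0 := by
        apply Fin.ext
        simp
      rw [h1, h0, e0]
      simp
  | succ K ih =>
      have hL : Finset.univ.filter (fun i : Fin (n + 1) => (i : ℕ) < K + 1)
          = insert (⟨K, by omega⟩ : Fin (n + 1))
              (Finset.univ.filter (fun i : Fin (n + 1) => (i : ℕ) < K)) := by
        ext i
        simp [Fin.ext_iff]
        omega
      rw [hL, Finset.sum_insert (by simp), aux_filter_succ x (K + 1) (by omega), ih (by omega)]
      have hs : (⟨K, by omega⟩ : Fin (n + 1)).succ = (⟨K + 1, by omega⟩ : Fin (n + 2)) := rfl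
      rw [hs]
      ring

lemma aux_Iic (n : ℕ) (x : Fin (n + 2) → ℝ) (j : Fin (n + 1)) :
    ∑ i ∈ Finset.Iic j, x i.succ
      = (∑ m ∈ Finset.univ.filter (fun m : Fin (n + 2) => (m : ℕ) < (j : ℕ) + 2), x m) - x 0 := by
  have hI : Finset.Iic j = Finset.univ.filter (fun i : Fin (n + 1) => (i : ℕ) < (j : ℕ) + 1) := by
    ext i
    simp only [Finset.mem_Iic, Finset.mem_filter, Finset.mem_univ, true_and, Fin.le_def]
    omega
  rw [hI, aux_succ_filter n x ((j : ℕ) + 1) (by omega)]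

/-- Scaling property of `δ`: for `P₀ = (x₁⁰,…,x_{n+2}⁰)` in the standard (n+1)-simplex with
`x₁⁰ < 1` and effort constants `a₂, …, a_{n+2}` (here `a i = a_{i+2}`), the rescaled point
`P̄₀ = (x₂⁰/(1−x₁⁰), …, x_{n+2}⁰/(1−x₁⁰))` lies in the standard n-simplex, and the
`g`-length of the path from `P₀` to `P₁¹` (the segments of the natural path from `Q (n+1) = P₀`
down to `Q 1 = P₁¹`, where the segment from `Q (k+1)` to `Q k` has effort `a_{k+1}`) equals
`(1 − x₁⁰) · δ(P̄₀, P̄₁)`, with `δ(P̄₀,P̄₁) = (a₂+⋯+a_{n+2}) − ∑ᵢ (a_{i+1}+⋯+a_{n+2}) ȳᵢ`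
computed in the standard n-simplex. -/
theorem stmt_14 (n : ℕ) (a : Fin (n + 1) → ℝ) (ha : ∀ i, 0 < a i)
    (x : Fin (n + 2) → ℝ) (hx : x ∈ stdSimplex ℝ (Fin (n + 2))) (h1 : x 0 < 1) :
    let P₀bar : Fin (n + 1) → ℝ := fun i => x i.succ / (1 - x 0)
    let b : Fin (n + 2) → ℝ := fun j => if h : 2 ≤ (j : ℕ) then a ⟨(j : ℕ) - 2, by omega⟩ else 1
    P₀bar ∈ stdSimplex ℝ (Fin (n + 1)) ∧
      ∑ k ∈ Finset.Ico 1 (n + 1),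
          gNorm b (pathPoint (n + 1) x (k + 1) - pathPoint (n + 1) x k) =
        (1 - x 0) *
          ((∑ j, a j) - ∑ i : Fin (n + 1), (∑ j ∈ Finset.Ici i, a j) * P₀bar i) := by
  intro P₀bar b
  have hpos : (0 : ℝ) < 1 - x 0 := by linarith
  have hne : (1 : ℝ) - x 0 ≠ 0 := ne_of_gt hpos
  have hsucc : ∑ i : Fin (n + 1), x i.succ = 1 - x 0 := by
    have h := Fin.sum_univ_succ x
    rw [hx.2] at h
    linarith
  have hb0 : ∀ j, 0 ≤ b j := by
    intro j
    show (0 : ℝ) ≤ if h : 2 ≤ (j : ℕ) then a ⟨(j : ℕ) - 2, by omega⟩ else 1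
    split_ifs
    · exact (ha _).le
    · exact zero_le_one
  constructor
  · refine ⟨fun i => div_nonneg (hx.1 _) hpos.le, ?_⟩
    show ∑ i : Fin (n + 1), x i.succ / (1 - x 0) = 1
    rw [← Finset.sum_div, hsucc, div_self hne]
  -- the common middle form
  have key : ∀ m : ℕ, m < n → (if h : m < n + 1 then
        a ⟨m, h⟩ * (1 - ∑ j ∈ Finset.univ.filter (fun j : Fin (n + 2) => (j : ℕ) < m + 2), x j)
      else 0)
      = gNorm b (pathPoint (n + 1) x (1 + m + 1) - pathPoint (n + 1) x (1 + m)) := by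
    intro m hm
    rw [show 1 + m = m + 1 by omega,
      gNorm_segment n x hx b hb0 (m + 1) (by omega), dif_pos (by omega : m < n + 1)]
    have e1 : b ⟨m + 1 + 1, by omega⟩ = a ⟨m, by omega⟩ := by
      show (if h : 2 ≤ ((⟨m + 1 + 1, by omega⟩ : Fin (n + 2)) : ℕ) then
          a ⟨((⟨m + 1 + 1, by omega⟩ : Fin (n + 2)) : ℕ) - 2, by omega⟩ else 1) = a ⟨m, by omega⟩
      rw [dif_pos (by exact (by omega : 2 ≤ m + 1 + 1))]
      exact congrArg a (Fin.ext (by omega : m + 1 + 1 - 2 = m))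
    rw [e1]
  -- LHS
  have hLHS : ∑ k ∈ Finset.Ico 1 (n + 1),
      gNorm b (pathPoint (n + 1) x (k + 1) - pathPoint (n + 1) x k)
      = ∑ m ∈ Finset.range n, (if h : m < n + 1 then
          a ⟨m, h⟩ * (1 - ∑ j ∈ Finset.univ.filter (fun j : Fin (n + 2) => (j : ℕ) < m + 2), x j)
        else 0) := by
    rw [Finset.sum_Ico_eq_sum_range]
    refine Finset.sum_congr (by norm_num) fun m hm => ?_
    exact (key m (by simpa using hm)).symm
  rw [hLHS]
  -- RHS
  have h2 : ∀ i : Fin (n + 1),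
      (1 - x 0) * ((∑ j ∈ Finset.Ici i, a j) * P₀bar i) = (∑ j ∈ Finset.Ici i, a j) * x i.succ := by
    intro i
    show (1 - x 0) * ((∑ j ∈ Finset.Ici i, a j) * (x i.succ / (1 - x 0)))
        = (∑ j ∈ Finset.Ici i, a j) * x i.succ
    field_simp
  have hswap : ∑ i : Fin (n + 1), (∑ j ∈ Finset.Ici i, a j) * x i.succ
      = ∑ j : Fin (n + 1), a j * (∑ i ∈ Finset.Iic j, x i.succ) := by
    have step : ∀ i : Fin (n + 1), (∑ j ∈ Finset.Ici i, a j) * x i.succ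
        = ∑ j : Fin (n + 1), (if i ≤ j then a j * x i.succ else 0) := by
      intro i
      rw [Finset.sum_mul,
        show Finset.Ici i = Finset.univ.filter (fun j => i ≤ j) by ext; simp,
        Finset.sum_filter]
    rw [Finset.sum_congr rfl fun i _ => step i, Finset.sum_comm]
    refine Finset.sum_congr rfl fun j _ => ?_
    rw [show Finset.Iic j = Finset.univ.filter (fun i => i ≤ j) by ext; simp,
      Finset.sum_filter, Finset.mul_sum]
    refine Finset.sum_congr rfl fun i _ => ?_
    split_ifs <;> ring
  have hRHS : (1 - x 0) * ((∑ j, a j) - ∑ i : Fin (n + 1), (∑ j ∈ Finset.Ici i, a j) * P₀bar i)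
      = ∑ j : Fin (n + 1), a j *
          (1 - ∑ m ∈ Finset.univ.filter (fun m : Fin (n + 2) => (m : ℕ) < (j : ℕ) + 2), x m) := by
    have eA : (1 - x 0) * ∑ i : Fin (n + 1), (∑ j ∈ Finset.Ici i, a j) * P₀bar i
        = ∑ j : Fin (n + 1), a j *
            ((∑ m ∈ Finset.univ.filter (fun m : Fin (n + 2) => (m : ℕ) < (j : ℕ) + 2), x m)
              - x 0) := by
      rw [Finset.mul_sum, Finset.sum_congr rfl fun i _ => h2 i, hswap]
      exact Finset.sum_congr rfl fun j _ => by rw [aux_Iic n x j]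
    rw [mul_sub, eA, Finset.mul_sum, ← Finset.sum_sub_distrib]
    refine Finset.sum_congr rfl fun j _ => ?_
    ring
  rw [hRHS]
  -- convert the Fin sum to a range sum and peel the top (vanishing) term
  have hFin : ∑ j : Fin (n + 1), a j *
        (1 - ∑ m ∈ Finset.univ.filter (fun m : Fin (n + 2) => (m : ℕ) < (j : ℕ) + 2), x m)
      = ∑ m ∈ Finset.range (n + 1), (if h : m < n + 1 then
          a ⟨m, h⟩ * (1 - ∑ j ∈ Finset.univ.filter (fun j : Fin (n + 2) => (j : ℕ) < m + 2), x j)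
        else 0) := by
    rw [← Fin.sum_univ_eq_sum_range]
    refine Finset.sum_congr rfl fun i _ => ?_
    rw [dif_pos i.isLt]
  have htop : (if h : n < n + 1 then
        a ⟨n, h⟩ * (1 - ∑ j ∈ Finset.univ.filter (fun j : Fin (n + 2) => (j : ℕ) < n + 2), x j)
      else 0) = 0 := by
    rw [dif_pos (by omega : n < n + 1), aux_filter_all x (n + 2) (by omega), hx.2]
    ring
  rw [hFin, Finset.sum_range_succ, htop, add_zero]
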